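/- arXiv:2202.05989 — 6 statements merged into one kernel-verified Lean document; each statement's English description precedes it below -/
import Mathlib

section
/- Let I' be a set of rectangles such that every rectangle i ∈ I' satisfies w_i ≤ ε·w and h_i ≤ ε·h for some 0 < ε < 1. If NFDH is run inside a box of width w and height h (stopping when the next rectangle does not fit), then the packed subset I'' ⊆ I' has area a(I'') ≥ min{a(I'), (1−2ε)·w·h}. In particular, if a(I') ≤ (1−2ε)·w·h, then all rectangles are packed. -/
/-!
Sort the rectangles by non-increasing height and fill shelves greedily. A shelf that is
followed by another one is wider than `(1 - ε) w`, since the next rectangle (of width at most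
`ε w`) did not fit on it, and its rectangles are at least as tall as the next shelf. So each
shelf pays for `(1 - ε) w` times the height of the next shelf, or of the rectangle at which
NFDH stops. When NFDH stops early these heights and that of the first shelf (at most `ε h`)
add up to more than `h`, so the packed area is at least `(1 - ε) w (1 - ε) h ≥ (1 - 2ε) w h`.
-/

open Finset

section

variable {ι : Type*} (w h : ι → ℝ)

def IsBoxPacking (W H : ℝ) (S : Finset ι) (x y : ι → ℝ) : Prop :=
  (∀ i ∈ S, 0 ≤ x i ∧ x i + w i ≤ W ∧ 0 ≤ y i ∧ y i + h i ≤ H) ∧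
  (∀ i ∈ S, ∀ j ∈ S, i ≠ j →
    x i + w i ≤ x j ∨ x j + w j ≤ x i ∨ y i + h i ≤ y j ∨ y j + h j ≤ y i)

variable {w h}

theorem isBoxPacking_empty (W H : ℝ) (x y : ι → ℝ) : IsBoxPacking w h W H ∅ x y := by
  simp [IsBoxPacking]

theorem IsBoxPacking.stack [DecidableEq ι] {W H H₁ : ℝ} {S₁ S₂ : Finset ι}
    {x₁ y₁ x₂ y₂ : ι → ℝ} (hH₁ : 0 ≤ H₁) (hH₁H : H₁ ≤ H)
    (p₁ : IsBoxPacking w h W H₁ S₁ x₁ y₁) (p₂ : IsBoxPacking w h W (H - H₁) S₂ x₂ y₂) :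
    IsBoxPacking w h W H (S₁ ∪ S₂) (S₁.piecewise x₁ x₂)
      (S₁.piecewise y₁ fun i => y₂ i + H₁) := by
  have mem₂ : ∀ {i}, i ∈ S₁ ∪ S₂ → i ∉ S₁ → i ∈ S₂ := fun hi hi₁ =>
    (mem_union.1 hi).resolve_left hi₁
  refine ⟨fun i hi => ?_, fun i hi j hj hij => ?_⟩
  · by_cases hi₁ : i ∈ S₁
    · obtain ⟨_, _, _, _⟩ := p₁.1 i hi₁
      simp only [piecewise_eq_of_mem _ _ _ hi₁]
      exact ⟨by assumption, by assumption, by assumption, by linarith⟩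
    · obtain ⟨_, _, _, _⟩ := p₂.1 i (mem₂ hi hi₁)
      simp only [piecewise_eq_of_notMem _ _ _ hi₁]
      exact ⟨by assumption, by assumption, by linarith, by linarith⟩
  · by_cases hi₁ : i ∈ S₁ <;> by_cases hj₁ : j ∈ S₁ <;>
      simp only [piecewise_eq_of_mem, piecewise_eq_of_notMem, hi₁, hj₁, not_false_eq_true]
    · exact p₁.2 i hi₁ j hj₁ hij
    · have := (p₁.1 i hi₁).2.2.2
      have := (p₂.1 j (mem₂ hj hj₁)).2.2.1
      right; right; left; linarith
    · have := (p₁.1 j hj₁).2.2.2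
      have := (p₂.1 i (mem₂ hi hi₁)).2.2.1
      right; right; right; linarith
    · rcases p₂.2 i (mem₂ hi hi₁) j (mem₂ hj hj₁) hij with hs | hs | hs | hs
      · exact Or.inl hs
      · exact Or.inr (Or.inl hs)
      · right; right; left; linarith
      · right; right; right; linarith

theorem exists_shelf_offsets [DecidableEq ι] (T : Finset ι) (hw : ∀ i ∈ T, 0 ≤ w i) :
    ∃ x : ι → ℝ, (∀ i ∈ T, 0 ≤ x i ∧ x i + w i ≤ ∑ j ∈ T, w j) ∧
      ∀ i ∈ T, ∀ j ∈ T, i ≠ j → x i + w i ≤ x j ∨ x j + w j ≤ x i := by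
  induction T using Finset.induction_on with
  | empty => simp
  | insert a T ha ih =>
    obtain ⟨x, hxT, hsep⟩ := ih fun i hi => hw i (mem_insert_of_mem hi)
    have hwa := hw a (mem_insert_self a T)
    have hT : 0 ≤ ∑ j ∈ T, w j := sum_nonneg fun i hi => hw i (mem_insert_of_mem hi)
    have hne : ∀ i ∈ T, i ≠ a := fun i hi hia => ha (hia ▸ hi)
    refine ⟨Function.update x a (∑ j ∈ T, w j), fun i hi => ?_, fun i hi j hj hij => ?_⟩
    · rw [sum_insert ha]
      rcases mem_insert.1 hi with rfl | hi
      · simp only [Function.update_self]; constructor <;> linarith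
      · obtain ⟨_, _⟩ := hxT i hi
        simp only [Function.update_of_ne (hne i hi)]; constructor <;> linarith
    · rcases mem_insert.1 hi with rfl | hiT <;> rcases mem_insert.1 hj with rfl | hjT
      · exact absurd rfl hij
      · simp only [Function.update_self, Function.update_of_ne (hne j hjT)]
        exact Or.inr (by linarith [(hxT j hjT).2])
      · simp only [Function.update_self, Function.update_of_ne (hne i hiT)]
        exact Or.inl (by linarith [(hxT i hiT).2])
      · simpa only [Function.update_of_ne (hne i hiT), Function.update_of_ne (hne j hjT)]
          using hsep i hiT j hjT hij

theorem exists_shelf_packing [DecidableEq ι] {W H : ℝ} (T : Finset ι)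
    (hw : ∀ i ∈ T, 0 ≤ w i) (hh : ∀ i ∈ T, h i ≤ H) (hT : ∑ i ∈ T, w i ≤ W) :
    ∃ x, IsBoxPacking w h W H T x 0 := by
  obtain ⟨x, hxT, hsep⟩ := exists_shelf_offsets T hw
  refine ⟨x, fun i hi => ?_, fun i hi j hj hij => (hsep i hi j hj hij).imp_right Or.inl⟩
  obtain ⟨_, _⟩ := hxT i hi
  simp only [Pi.zero_apply, le_refl, zero_add, hh i hi, and_true]
  constructor <;> linarith

theorem List.exists_greedy_prefix (l : List ι) {B : ℝ} (hB : 0 ≤ B) :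
    ∃ p s, l = p ++ s ∧ (p.map w).sum ≤ B ∧ ∀ b ∈ s.head?, B < (p.map w).sum + w b := by
  induction l generalizing B with
  | nil => exact ⟨[], [], rfl, by simpa, by simp⟩
  | cons a t ih =>
    by_cases ha : w a ≤ B
    · obtain ⟨p, s, rfl, hp, hs⟩ := ih (sub_nonneg.2 ha)
      refine ⟨a :: p, s, rfl, ?_, fun b hb => ?_⟩
      · simp only [List.map_cons, List.sum_cons]; linarith
      · simp only [List.map_cons, List.sum_cons]; linarith [hs b hb]
    · exact ⟨[], a :: t, rfl, by simpa, by simpa using lt_of_not_ge ha⟩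

theorem mul_le_sum_mul_of_le {T : Finset ι} {V c : ℝ} (hw : ∀ i ∈ T, 0 ≤ w i) (hc : 0 ≤ c)
    (hV : V ≤ ∑ i ∈ T, w i) (hch : ∀ i ∈ T, c ≤ h i) : V * c ≤ ∑ i ∈ T, w i * h i := by
  refine (mul_le_mul_of_nonneg_right hV hc).trans ?_
  rw [sum_mul]
  exact sum_le_sum fun i hi => mul_le_mul_of_nonneg_left (hch i hi) (hw i hi)

theorem exists_nfdh_shelf [DecidableEq ι] {W δ : ℝ} (hw : ∀ i, 0 ≤ w i) (hh : ∀ i, 0 ≤ h i)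
    (hwδ : ∀ i, w i ≤ δ) (hδW : δ ≤ W) {a : ι} {t : List ι} (hl : (a :: t).Nodup)
    (hsort : (a :: t).Pairwise fun i j => h j ≤ h i) :
    ∃ p s x, t = p ++ s ∧ IsBoxPacking w h W (h a) (a :: p).toFinset x 0 ∧
      ∀ b ∈ s, (W - δ) * h b ≤ ∑ i ∈ (a :: p).toFinset, w i * h i := by
  obtain ⟨p, s, rfl, hpW, hfull⟩ := t.exists_greedy_prefix (w := w) (B := W - w a)
    (by linarith [hwδ a])
  rw [← List.cons_append] at hl hsort
  obtain ⟨hsortp, -, hcross⟩ := List.pairwise_append.1 hsort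
  have hPw : ∑ i ∈ (a :: p).toFinset, w i = w a + (p.map w).sum := by
    rw [List.sum_toFinset _ (List.nodup_append.1 hl).1, List.map_cons, List.sum_cons]
  have hPh : ∀ i ∈ (a :: p).toFinset, h i ≤ h a := by
    intro i hi
    rcases List.mem_cons.1 (List.mem_toFinset.1 hi) with rfl | hi
    · exact le_rfl
    · exact List.rel_of_pairwise_cons hsortp hi
  obtain ⟨x, hP⟩ := exists_shelf_packing (W := W) _ (fun i _ => hw i) hPh (by linarith)
  refine ⟨p, s, x, rfl, hP, fun b hb => ?_⟩
  have hb₀ := List.head_mem_head? (List.ne_nil_of_mem hb)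
  have hwide : W - δ ≤ ∑ i ∈ (a :: p).toFinset, w i := by
    linarith [hfull _ hb₀, hwδ (s.head (List.ne_nil_of_mem hb))]
  exact mul_le_sum_mul_of_le (fun i _ => hw i) (hh b) hwide
    fun i hi => hcross i (List.mem_toFinset.1 hi) b hb

theorem exists_nfdh_packing [DecidableEq ι] {W δ : ℝ} (hw : ∀ i, 0 ≤ w i) (hh : ∀ i, 0 ≤ h i)
    (hwδ : ∀ i, w i ≤ δ) (hδW : δ ≤ W) (l : List ι) (hl : l.Nodup)
    (hsort : l.Pairwise fun i j => h j ≤ h i) (H : ℝ) :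
    ∃ S x y, S ⊆ l.toFinset ∧ IsBoxPacking w h W H S x y ∧
      (S = l.toFinset ∨ ∃ b ∈ l, (W - δ) * (H - h b) ≤ ∑ i ∈ S, w i * h i) := by
  induction hlen : l.length using Nat.strong_induction_on generalizing l H with
  | _ n ih =>
  match l with
  | [] => exact ⟨∅, 0, 0, empty_subset _, isBoxPacking_empty _ _ _ _, Or.inl rfl⟩
  | a :: t =>
  by_cases hfit : h a ≤ H
  swap
  · refine ⟨∅, 0, 0, empty_subset _, isBoxPacking_empty _ _ _ _,
      Or.inr ⟨a, List.mem_cons_self, ?_⟩⟩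
    rw [sum_empty]
    exact mul_nonpos_of_nonneg_of_nonpos (by linarith) (by linarith)
  obtain ⟨p, s, x₁, rfl, hP, hParea⟩ := exists_nfdh_shelf hw hh hwδ hδW hl hsort
  rw [← List.cons_append] at hl hsort ⊢
  obtain ⟨-, hls, hdisj⟩ := List.nodup_append.1 hl
  obtain ⟨S₂, x₂, y₂, hS₂s, hS₂, hrest⟩ := ih s.length
    (by simp only [← hlen, List.length_append, List.length_cons]; omega)
    s hls (List.pairwise_append.1 hsort).2.1 (H - h a) rfl
  refine ⟨_ ∪ S₂, _, _, by
    rw [List.toFinset_append]; exact union_subset_union subset_rfl hS₂s,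
    hP.stack (hh a) hfit hS₂, ?_⟩
  rcases hrest with rfl | ⟨b, hb, hbound⟩
  · exact Or.inl List.toFinset_append.symm
  have hdisjoint : Disjoint (a :: p).toFinset S₂ := (List.disjoint_toFinset_iff_disjoint.2
    fun i hip his => hdisj i hip i his rfl).mono_right hS₂s
  refine Or.inr ⟨a, List.mem_cons_self, ?_⟩
  rw [sum_union hdisjoint]
  linarith [hParea b hb]

theorem Fintype.exists_sorted_enumeration {α : Type*} [LinearOrder α] [Fintype ι] (f : ι → α) :
    ∃ l : List ι, l.Nodup ∧ (∀ i, i ∈ l) ∧ l.Pairwise fun i j => f j ≤ f i := by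
  refine ⟨univ.toList.mergeSort fun i j => decide (f j ≤ f i),
    (List.mergeSort_perm _ _).nodup_iff.2 (nodup_toList _), by simp, ?_⟩
  refine (List.pairwise_mergeSort (fun i j k hij hjk => ?_) (fun i j => ?_) _).imp (by simp)
  · simp only [decide_eq_true_eq] at hij hjk ⊢; exact hjk.trans hij
  · simpa using le_total (f j) (f i)

end

theorem nfdh_box_packing_general (n : ℕ) (ε wB hB : ℝ) (w h : Fin n → ℝ)
    (hε1 : ε < 1) (hwB : 0 < wB) (hhB : 0 < hB)
    (hwpos : ∀ i, 0 < w i) (hhpos : ∀ i, 0 < h i)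
    (hwsmall : ∀ i, w i ≤ ε * wB) (hhsmall : ∀ i, h i ≤ ε * hB) :
    ∃ (S : Finset (Fin n)) (x y : Fin n → ℝ),
      (∀ i ∈ S, 0 ≤ x i ∧ x i + w i ≤ wB ∧ 0 ≤ y i ∧ y i + h i ≤ hB) ∧
      (∀ i ∈ S, ∀ j ∈ S, i ≠ j →
        x i + w i ≤ x j ∨ x j + w j ≤ x i ∨ y i + h i ≤ y j ∨ y j + h j ≤ y i) ∧
      min (∑ i, w i * h i) ((1 - 2 * ε) * wB * hB) ≤ ∑ i ∈ S, w i * h i := by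
  obtain ⟨l, hl, hmem, hsort⟩ := Fintype.exists_sorted_enumeration h
  obtain ⟨S, x, y, -, ⟨hbox, hsep⟩, hS⟩ := exists_nfdh_packing (W := wB)
    (fun i => (hwpos i).le) (fun i => (hhpos i).le) hwsmall (by nlinarith) l hl hsort hB
  refine ⟨S, x, y, hbox, hsep, ?_⟩
  rcases hS with rfl | ⟨b, -, hb⟩
  · rw [eq_univ_of_forall fun i => List.mem_toFinset.2 (hmem i)]
    exact min_le_left _ _
  refine (min_le_right _ _).trans (le_trans ?_ hb)
  have hε : 0 ≤ wB - ε * wB := by nlinarith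
  calc (1 - 2 * ε) * wB * hB ≤ (1 - 2 * ε + ε ^ 2) * wB * hB := by gcongr; nlinarith
    _ = (wB - ε * wB) * (hB - ε * hB) := by ring
    _ ≤ (wB - ε * wB) * (hB - h b) := by gcongr; exact hhsmall b

/-- NFDH inside a box: if every rectangle `i` satisfies `w i ≤ ε·wB` and `h i ≤ ε·hB`
(for some `0 < ε < 1`), then a subset `S` of the rectangles can be packed (axis-aligned,
non-overlapping) into the box `[0,wB] × [0,hB]` whose total area is at least
`min (a(I'), (1 − 2ε)·wB·hB)`.  In particular, if the total area is at most
`(1 − 2ε)·wB·hB`, all rectangles are packed. -/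
theorem nfdh_box_packing (n : ℕ) (ε wB hB : ℝ) (w h : Fin n → ℝ)
    (hε0 : 0 < ε) (hε1 : ε < 1) (hwB : 0 < wB) (hhB : 0 < hB)
    (hwpos : ∀ i, 0 < w i) (hhpos : ∀ i, 0 < h i)
    (hwsmall : ∀ i, w i ≤ ε * wB) (hhsmall : ∀ i, h i ≤ ε * hB) :
    ∃ (S : Finset (Fin n)) (x y : Fin n → ℝ),
      (∀ i ∈ S, 0 ≤ x i ∧ x i + w i ≤ wB ∧ 0 ≤ y i ∧ y i + h i ≤ hB) ∧
      (∀ i ∈ S, ∀ j ∈ S, i ≠ j →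
        x i + w i ≤ x j ∨ x j + w j ≤ x i ∨ y i + h i ≤ y j ∨ y j + h j ≤ y i) ∧
      min (∑ i, w i * h i) ((1 - 2 * ε) * wB * hB) ≤ ∑ i ∈ S, w i * h i :=
  nfdh_box_packing_general n ε wB hB w h hε1 hwB hhB hwpos hhpos hwsmall hhsmall
end

section
/- Given ε > 0 and any positive increasing function f with f(x) < x for all x ∈ (0,1], and given a finite set of rectangles with heights h_i and widths w_i fitting in [0,W]×[0,OPT], one can find constants δ, μ with ε ≥ f(ε) ≥ δ ≥ f(δ) ≥ μ such that the total area of the 'medium' rectangles — those with δ·OPT ≥ h_i > μ·OPT, or with δ·W ≥ w_i > μ·W and h_i ≤ μ·OPT — is at most ε·OPT·W. -/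
/-!
Iterate `f` from `f ε` to get thresholds `ε ≥ f ε = ε₀ > ε₁ > ⋯`, with `εⱼ₊₁ = f εⱼ`, and call a
rectangle medium of class `j` when it is medium for `(δ, μ) = (εⱼ, εⱼ₊₁)`. Since the intervals
`(εⱼ₊₁, εⱼ]` are disjoint, a rectangle is medium for at most two classes: once through its height
and once through its width. Summing over `N = ⌈2/ε⌉₊` classes therefore counts the total area,
at most `OPT·W`, at most twice, so some class has area at most `2·OPT·W / N ≤ ε·OPT·W`.
-/

open scoped Classical

open Finset

def IsMedium (W OPT δ μ w h : ℝ) : Prop :=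
  (μ * OPT < h ∧ h ≤ δ * OPT) ∨ (μ * W < w ∧ w ≤ δ * W ∧ h ≤ μ * OPT)

/-- Unfolding to the `Or` instance (rather than `Classical.propDecidable`) makes the filters over
`IsMedium` definitionally those of the theorem. -/
noncomputable instance (W OPT δ μ w h : ℝ) : Decidable (IsMedium W OPT δ μ w h) :=
  inferInstanceAs (Decidable (_ ∨ _))

theorem strictAnti_iterate_of_lt {α : Type*} [Preorder α] {f : α → α} {s : Set α}
    (hs : Set.MapsTo f s s) (hlt : ∀ x ∈ s, f x < x) {x : α} (hx : x ∈ s) :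
    StrictAnti fun j => f^[j] x :=
  strictAnti_nat_of_succ_lt fun j => by
    rw [Function.iterate_succ_apply']
    exact hlt _ (hs.iterate j hx)

theorem Antitone.card_filter_mem_Ioc_succ_le_one {β : Type*} [Preorder β] {a : ℕ → β}
    (ha : Antitone a) (s : Finset ℕ) (v : β) :
    #{j ∈ s | v ∈ Set.Ioc (a (j + 1)) (a j)} ≤ 1 := by
  refine card_le_one.2 fun j hj k hk => by_contra fun hne => ?_
  have hdisj := ha.pairwise_disjoint_on_Ioc_succ hne
  simp only [Function.onFun, Order.succ_eq_add_one] at hdisj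
  exact Set.disjoint_left.1 hdisj (mem_filter.1 hj).2 (mem_filter.1 hk).2

theorem card_filter_isMedium_le_two {W OPT : ℝ} (hW : 0 ≤ W) (hOPT : 0 ≤ OPT) {a : ℕ → ℝ}
    (ha : Antitone a) (s : Finset ℕ) (w h : ℝ) :
    #{j ∈ s | IsMedium W OPT (a j) (a (j + 1)) w h} ≤ 2 := by
  have hsub : {j ∈ s | IsMedium W OPT (a j) (a (j + 1)) w h} ⊆
      {j ∈ s | h ∈ Set.Ioc (a (j + 1) * OPT) (a j * OPT)} ∪
        {j ∈ s | w ∈ Set.Ioc (a (j + 1) * W) (a j * W)} := by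
    intro j hj
    obtain ⟨hjs, hheight | ⟨hw₁, hw₂, -⟩⟩ := mem_filter.1 hj
    · exact mem_union_left _ (mem_filter.2 ⟨hjs, hheight⟩)
    · exact mem_union_right _ (mem_filter.2 ⟨hjs, hw₁, hw₂⟩)
  calc _ ≤ _ := card_le_card hsub
    _ ≤ _ := card_union_le _ _
    _ ≤ 1 + 1 := add_le_add
        ((ha.mul_const hOPT).card_filter_mem_Ioc_succ_le_one s h)
        ((ha.mul_const hW).card_filter_mem_Ioc_succ_le_one s w)

theorem sum_sum_filter_le_mul_sum {ι κ : Type*} (s : Finset κ) (t : Finset ι)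
    (P : κ → ι → Prop) [∀ j i, Decidable (P j i)] {x : ι → ℝ} (hx : ∀ i ∈ t, 0 ≤ x i) {k : ℕ}
    (hk : ∀ i ∈ t, #{j ∈ s | P j i} ≤ k) :
    ∑ j ∈ s, ∑ i ∈ t with P j i, x i ≤ k * ∑ i ∈ t, x i := by
  calc ∑ j ∈ s, ∑ i ∈ t with P j i, x i
      = ∑ i ∈ t, (#{j ∈ s | P j i} : ℝ) * x i := by
        rw [sum_comm' (t' := t) (s' := fun i => {j ∈ s | P j i})]
        · simp
        · simp only [mem_filter]; tauto
    _ ≤ ∑ i ∈ t, (k : ℝ) * x i :=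
        sum_le_sum fun i hi => mul_le_mul_of_nonneg_right (by exact_mod_cast hk i hi) (hx i hi)
    _ = k * ∑ i ∈ t, x i := (mul_sum _ _ _).symm

theorem exists_lt_mul_sum_filter_le {ι : Type*} {N : ℕ} (hN : 0 < N) (t : Finset ι)
    (P : ℕ → ι → Prop) [∀ j i, Decidable (P j i)] {x : ι → ℝ} (hx : ∀ i ∈ t, 0 ≤ x i) {k : ℕ}
    (hk : ∀ i ∈ t, #{j ∈ range N | P j i} ≤ k) :
    ∃ j < N, N * ∑ i ∈ t with P j i, x i ≤ k * ∑ i ∈ t, x i := by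
  obtain ⟨j, hj, hle⟩ := exists_le_of_sum_le (nonempty_range_iff.2 hN.ne')
    (f := fun j => ∑ i ∈ t with P j i, x i) (g := fun _ => k * (∑ i ∈ t, x i) / N)
    (by
      rw [sum_const, card_range, nsmul_eq_mul, mul_div_cancel₀ _ (by positivity : (N : ℝ) ≠ 0)]
      exact sum_sum_filter_le_mul_sum _ t P hx hk)
  refine ⟨j, mem_range.1 hj, ?_⟩
  rwa [le_div_iff₀ (by positivity), mul_comm] at hle

theorem medium_items_small_area_general (ε : ℝ) (hε0 : 0 < ε) (hε1 : ε ≤ 1)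
    (f : ℝ → ℝ)
    (hfpos : ∀ x, 0 < x → x ≤ 1 → 0 < f x)
    (hflt : ∀ x, 0 < x → x ≤ 1 → f x < x)
    (n : ℕ) (w h : Fin n → ℝ) (W OPT : ℝ) (hW : 0 < W) (hOPT : 0 < OPT)
    (hw : ∀ i, 0 < w i ∧ w i ≤ W) (hh : ∀ i, 0 < h i ∧ h i ≤ OPT)
    (harea : ∑ i, w i * h i ≤ OPT * W) :
    ∃ δ μ : ℝ, 0 < μ ∧ μ ≤ f δ ∧ f δ ≤ δ ∧ δ ≤ f ε ∧ f ε ≤ ε ∧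
      ∑ i ∈ Finset.univ.filter (fun i =>
          (μ * OPT < h i ∧ h i ≤ δ * OPT) ∨
          (μ * W < w i ∧ w i ≤ δ * W ∧ h i ≤ μ * OPT)),
        w i * h i ≤ ε * (OPT * W) := by
  have hmaps : Set.MapsTo f (Set.Ioc 0 1) (Set.Ioc 0 1) := fun x hx =>
    ⟨hfpos x hx.1 hx.2, (hflt x hx.1 hx.2).le.trans hx.2⟩
  have hε : f ε ∈ Set.Ioc 0 1 := hmaps ⟨hε0, hε1⟩
  set a : ℕ → ℝ := fun j => f^[j] (f ε)
  have ha : StrictAnti a := strictAnti_iterate_of_lt hmaps (fun x hx => hflt x hx.1 hx.2) hε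
  have ha_succ (j : ℕ) : a (j + 1) = f (a j) := Function.iterate_succ_apply' f j (f ε)
  set N := ⌈2 / ε⌉₊
  have hN : (0 : ℝ) < N := Nat.cast_pos.2 (Nat.ceil_pos.2 (by positivity))
  have hNε : 2 ≤ N * ε := (div_le_iff₀ hε0).1 (Nat.le_ceil _)
  obtain ⟨j, -, hj⟩ := exists_lt_mul_sum_filter_le (Nat.cast_pos.1 hN) univ
    (fun j i => IsMedium W OPT (a j) (a (j + 1)) (w i) (h i))
    (fun i _ => mul_nonneg (hw i).1.le (hh i).1.le)
    (fun i _ => card_filter_isMedium_le_two hW.le hOPT.le ha.antitone _ (w i) (h i))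
  refine ⟨a j, a (j + 1), (hmaps.iterate (j + 1) hε).1, (ha_succ j).le,
    ha_succ j ▸ ha.antitone j.le_succ, ha.antitone j.zero_le, (hflt ε hε0 hε1).le, ?_⟩
  refine le_of_mul_le_mul_left (hj.trans ?_) hN
  calc (2 : ℝ) * ∑ i, w i * h i ≤ 2 * (OPT * W) := by gcongr
    _ ≤ N * ε * (OPT * W) := by gcongr
    _ = N * (ε * (OPT * W)) := mul_assoc _ _ _

/-- Given `ε > 0` and a positive increasing function `f` with `f x < x` on `(0,1]`, and
a finite set of rectangles fitting in `[0,W] × [0,OPT]`, one can find `δ, μ` with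
`ε ≥ f ε ≥ δ ≥ f δ ≥ μ > 0` such that the total area of the medium rectangles —
those with `μ·OPT < h i ≤ δ·OPT`, or with `μ·W < w i ≤ δ·W` and `h i ≤ μ·OPT` —
is at most `ε·OPT·W`. -/
theorem medium_items_small_area (ε : ℝ) (hε0 : 0 < ε) (hε1 : ε ≤ 1)
    (f : ℝ → ℝ)
    (hfpos : ∀ x, 0 < x → x ≤ 1 → 0 < f x)
    (hfmono : StrictMonoOn f (Set.Ioc (0 : ℝ) 1))
    (hflt : ∀ x, 0 < x → x ≤ 1 → f x < x)
    (n : ℕ) (w h : Fin n → ℝ) (W OPT : ℝ) (hW : 0 < W) (hOPT : 0 < OPT)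
    (hw : ∀ i, 0 < w i ∧ w i ≤ W) (hh : ∀ i, 0 < h i ∧ h i ≤ OPT)
    (harea : ∑ i, w i * h i ≤ OPT * W) :
    ∃ δ μ : ℝ, 0 < μ ∧ μ ≤ f δ ∧ f δ ≤ δ ∧ δ ≤ f ε ∧ f ε ≤ ε ∧
      ∑ i ∈ Finset.univ.filter (fun i =>
          (μ * OPT < h i ∧ h i ≤ δ * OPT) ∨
          (μ * W < w i ∧ w i ≤ δ * W ∧ h i ≤ μ * OPT)),
        w i * h i ≤ ε * (OPT * W) :=
  medium_items_small_area_general ε hε0 hε1 f hfpos hflt n w h W OPT hW hOPT hw hh harea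
end

section
/- The Partition problem reduces to guillotine strip packing as follows: given positive integers i_1,...,i_n with total T, construct rectangles R_1,...,R_n of height 1 and widths i_1,...,i_n, and a strip of width T/2. Then there exists a partition of {i_1,...,i_n} into two sets each summing to T/2 if and only if there exists a guillotine-separable packing of R_1,...,R_n into the strip of height at most 2. -/
/-!
In a packing of height 2, the unit-height rectangles lying below height 1 pairwise overlap
vertically, so they must be horizontally disjoint and their widths add up to at most `T/2`;
the same holds for the remaining rectangles, and since all widths add up to `T` both groups
sum to exactly `T/2`. Conversely, the two parts of a partition, each placed left-justified in
its own row, are separated by the cut `y = 1` followed by vertical cuts between neighbours.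
-/

/-- An axis-aligned box / rectangle given by its left, right, bottom and top coordinates. -/
structure Box where
  l : ℝ
  r : ℝ
  b : ℝ
  t : ℝ

/-- `A` lies inside `B`. -/
def Box.Inside (A B : Box) : Prop :=
  B.l ≤ A.l ∧ A.r ≤ B.r ∧ B.b ≤ A.b ∧ A.t ≤ B.t

/-- The open interiors of `A` and `B` are disjoint (non-overlapping placement). -/
def Box.NonOverlap (A B : Box) : Prop :=
  A.r ≤ B.l ∨ B.r ≤ A.l ∨ A.t ≤ B.b ∨ B.t ≤ A.b

/-- Guillotine separability of a family of placed rectangles inside a box: the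
rectangles indexed by `S` can be separated by a recursive sequence of axis-parallel
end-to-end (guillotine) cuts, none of which intersects the interior of a rectangle. -/
inductive GSep {ι : Type} [DecidableEq ι] (rect : ι → Box) : Finset ι → Box → Prop
  | empty (B : Box) : GSep rect ∅ B
  | single (i : ι) (B : Box) : (rect i).Inside B → GSep rect {i} B
  | vcut (S S₁ S₂ : Finset ι) (B : Box) (x : ℝ) :
      B.l ≤ x → x ≤ B.r →
      S₁ ∪ S₂ = S → Disjoint S₁ S₂ →
      (∀ i ∈ S₁, (rect i).r ≤ x) → (∀ i ∈ S₂, x ≤ (rect i).l) →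
      GSep rect S₁ ⟨B.l, x, B.b, B.t⟩ →
      GSep rect S₂ ⟨x, B.r, B.b, B.t⟩ →
      GSep rect S B
  | hcut (S S₁ S₂ : Finset ι) (B : Box) (y : ℝ) :
      B.b ≤ y → y ≤ B.t →
      S₁ ∪ S₂ = S → Disjoint S₁ S₂ →
      (∀ i ∈ S₁, (rect i).t ≤ y) → (∀ i ∈ S₂, y ≤ (rect i).b) →
      GSep rect S₁ ⟨B.l, B.r, B.b, y⟩ →
      GSep rect S₂ ⟨B.l, B.r, y, B.t⟩ →
      GSep rect S B

/-- The rectangle of item `i` placed at position `(x i, y i)` with width `w i` and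
height `h i`. -/
def rectOf {n : ℕ} (x y w h : Fin n → ℝ) (i : Fin n) : Box :=
  ⟨x i, x i + w i, y i, y i + h i⟩

open Finset MeasureTheory

theorem sum_le_sub_of_nonoverlapping_intervals {ι : Type*} (s : Finset ι) (x w : ι → ℝ)
    {L R : ℝ} (hLR : L ≤ R) (hw : ∀ i ∈ s, 0 ≤ w i) (hsub : ∀ i ∈ s, L ≤ x i ∧ x i + w i ≤ R)
    (hdisj : ∀ i ∈ s, ∀ j ∈ s, i ≠ j → x i + w i ≤ x j ∨ x j + w j ≤ x i) :
    ∑ i ∈ s, w i ≤ R - L := by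
  have hpd : (s : Set ι).PairwiseDisjoint fun i => Set.Ioo (x i) (x i + w i) := by
    intro i hi j hj hij
    rw [Function.onFun, Set.Ioo_disjoint_Ioo]
    rcases hdisj i hi j hj hij with h | h
    · exact min_le_of_left_le (h.trans (le_max_right _ _))
    · exact min_le_of_right_le (h.trans (le_max_left _ _))
  have hvol : ∑ i ∈ s, ENNReal.ofReal (w i) ≤ ENNReal.ofReal (R - L) :=
    calc ∑ i ∈ s, ENNReal.ofReal (w i)
        = ∑ i ∈ s, volume (Set.Ioo (x i) (x i + w i)) := by simp [Real.volume_Ioo]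
      _ = volume (⋃ i ∈ s, Set.Ioo (x i) (x i + w i)) :=
          (measure_biUnion_finset hpd fun _ _ => measurableSet_Ioo).symm
      _ ≤ volume (Set.Ioo L R) :=
          measure_mono <| Set.iUnion₂_subset fun i hi =>
            Set.Ioo_subset_Ioo (hsub i hi).1 (hsub i hi).2
      _ = ENNReal.ofReal (R - L) := Real.volume_Ioo
  rwa [← ENNReal.ofReal_sum_of_nonneg hw, ENNReal.ofReal_le_ofReal_iff (sub_nonneg.2 hLR)]
    at hvol

theorem Box.NonOverlap.horizontal {A B : Box} (h : A.NonOverlap B) (hAB : B.b < A.t)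
    (hBA : A.b < B.t) : A.r ≤ B.l ∨ B.r ≤ A.l := by
  rcases h with h | h | h | h
  · exact .inl h
  · exact .inr h
  · exact absurd h hAB.not_ge
  · exact absurd h hBA.not_ge

theorem GSep.of_sorted {ι : Type} [DecidableEq ι] [LinearOrder ι] (rect : ι → Box)
    (s : Finset ι) (B : Box) (hin : ∀ i ∈ s, (rect i).Inside B)
    (hlr : ∀ i ∈ s, (rect i).l ≤ (rect i).r)
    (hsorted : ∀ i ∈ s, ∀ j ∈ s, i < j → (rect i).r ≤ (rect j).l) :
    GSep rect s B := by
  induction s using Finset.induction_on_max generalizing B with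
  | empty => exact .empty B
  | insert m s hlt ih =>
    have hm := hin m (mem_insert_self m s)
    refine .vcut _ s {m} B (rect m).l hm.1 ((hlr m (mem_insert_self m s)).trans hm.2.1)
      (by rw [union_comm, insert_eq]) (disjoint_singleton_right.2 fun hms => (hlt m hms).false)
      (fun i hi => hsorted i (mem_insert_of_mem hi) m (mem_insert_self m s) (hlt i hi))
      (fun i hi => mem_singleton.1 hi ▸ le_rfl) ?_
      (.single m _ ⟨le_rfl, hm.2.1, hm.2.2.1, hm.2.2.2⟩)
    refine ih _ (fun i hi => ?_) (fun i hi => hlr i (mem_insert_of_mem hi))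
      (fun i hi j hj => hsorted i (mem_insert_of_mem hi) j (mem_insert_of_mem hj))
    have hi' := hin i (mem_insert_of_mem hi)
    exact ⟨hi'.1, hsorted i (mem_insert_of_mem hi) m (mem_insert_self m s) (hlt i hi),
      hi'.2.2.1, hi'.2.2.2⟩

section Row

variable {ι : Type*} [LinearOrder ι] (s : Finset ι) (w : ι → ℝ) {i j : ι}

def rowOffset (i : ι) : ℝ := ∑ k ∈ s with k < i, w k

theorem rowOffset_add_eq (hi : i ∈ s) : rowOffset s w i + w i = ∑ k ∈ s with k ≤ i, w k := by
  have hins : {k ∈ s | k ≤ i} = insert i {k ∈ s | k < i} := by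
    ext k
    simp only [mem_filter, mem_insert, le_iff_lt_or_eq]
    constructor
    · rintro ⟨hk, hlt | rfl⟩ <;> simp [*]
    · rintro (rfl | ⟨hk, hlt⟩) <;> simp [*]
  rw [hins, sum_insert (by simp), add_comm, rowOffset]

variable {s w}

theorem rowOffset_nonneg (hw : ∀ k ∈ s, 0 ≤ w k) : 0 ≤ rowOffset s w i :=
  sum_nonneg fun k hk => hw k (mem_filter.1 hk).1

theorem rowOffset_add_le_sum (hw : ∀ k ∈ s, 0 ≤ w k) (hi : i ∈ s) :
    rowOffset s w i + w i ≤ ∑ k ∈ s, w k := by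
  rw [rowOffset_add_eq s w hi]
  exact sum_le_sum_of_subset_of_nonneg (filter_subset _ _) fun k hk _ => hw k hk

theorem rowOffset_add_le_rowOffset (hw : ∀ k ∈ s, 0 ≤ w k) (hi : i ∈ s) (hij : i < j) :
    rowOffset s w i + w i ≤ rowOffset s w j := by
  rw [rowOffset_add_eq s w hi, rowOffset]
  refine sum_le_sum_of_subset_of_nonneg (fun k hk => ?_) fun k hk _ => hw k (mem_filter.1 hk).1
  simp only [mem_filter] at hk ⊢
  exact ⟨hk.1, hk.2.trans_lt hij⟩

end Row

section Packing

variable {n : ℕ} {x y w : Fin n → ℝ} {s : Finset (Fin n)}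

theorem nonOverlap_of_eq_rowOffset (hw : ∀ k ∈ s, 0 ≤ w k) (hx : ∀ i ∈ s, x i = rowOffset s w i)
    {i j : Fin n} (hi : i ∈ s) (hj : j ∈ s) (hij : i ≠ j) :
    (rectOf x y w (fun _ => 1) i).NonOverlap (rectOf x y w (fun _ => 1) j) := by
  simp only [Box.NonOverlap, rectOf, hx i hi, hx j hj]
  rcases hij.lt_or_gt with h | h
  · exact .inl (rowOffset_add_le_rowOffset hw hi h)
  · exact .inr (.inl (rowOffset_add_le_rowOffset hw hj h))

theorem GSep.of_eq_rowOffset (hw : ∀ k ∈ s, 0 ≤ w k) (hx : ∀ i ∈ s, x i = rowOffset s w i)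
    {C b t : ℝ} (hC : ∑ k ∈ s, w k = C) (hy : ∀ i ∈ s, b ≤ y i ∧ y i + 1 ≤ t) :
    GSep (rectOf x y w fun _ => 1) s ⟨0, C, b, t⟩ := by
  refine GSep.of_sorted _ s _ (fun i hi => ?_) (fun i hi => ?_) (fun i hi j hj hij => ?_)
  · simp only [Box.Inside, rectOf, hx i hi, ← hC]
    exact ⟨rowOffset_nonneg hw, rowOffset_add_le_sum hw hi, hy i hi⟩
  · simpa [rectOf] using hw i hi
  · simpa [rectOf, hx i hi, hx j hj] using rowOffset_add_le_rowOffset hw hi hij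

theorem exists_guillotine_packing_of_sum_eq (hw : ∀ i, 0 ≤ w i) (S : Finset (Fin n)) {C : ℝ}
    (hS : ∑ i ∈ S, w i = C) (hSc : ∑ i ∈ Sᶜ, w i = C) :
    ∃ x y : Fin n → ℝ,
      (∀ i, 0 ≤ x i ∧ x i + w i ≤ C ∧ 0 ≤ y i ∧ y i + 1 ≤ 2) ∧
      (∀ i j, i ≠ j → (rectOf x y w (fun _ => 1) i).NonOverlap (rectOf x y w (fun _ => 1) j)) ∧
      GSep (rectOf x y w fun _ => 1) univ ⟨0, C, 0, 2⟩ := by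
  have hw' : ∀ s : Finset (Fin n), ∀ k ∈ s, 0 ≤ w k := fun _ k _ => hw k
  set x : Fin n → ℝ := fun i => if i ∈ S then rowOffset S w i else rowOffset Sᶜ w i
  set y : Fin n → ℝ := fun i => if i ∈ S then 0 else 1
  have hxS : ∀ i ∈ S, x i = rowOffset S w i := fun i hi => if_pos hi
  have hxSc : ∀ i ∈ Sᶜ, x i = rowOffset Sᶜ w i := fun i hi => if_neg (mem_compl.1 hi)
  refine ⟨x, y, fun i => ?_, fun i j hij => ?_, ?_⟩
  · by_cases hi : i ∈ S
    · rw [hxS i hi, ← hS]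
      exact ⟨rowOffset_nonneg (hw' S), rowOffset_add_le_sum (hw' S) hi, by norm_num [y, hi]⟩
    · rw [hxSc i (mem_compl.2 hi), ← hSc]
      exact ⟨rowOffset_nonneg (hw' Sᶜ), rowOffset_add_le_sum (hw' Sᶜ) (mem_compl.2 hi),
        by norm_num [y, hi]⟩
  · by_cases hi : i ∈ S <;> by_cases hj : j ∈ S
    · exact nonOverlap_of_eq_rowOffset (hw' S) hxS hi hj hij
    · exact .inr (.inr (.inl (by simp [rectOf, y, hi, hj])))
    · exact .inr (.inr (.inr (by simp [rectOf, y, hi, hj])))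
    · exact nonOverlap_of_eq_rowOffset (hw' Sᶜ) hxSc (mem_compl.2 hi) (mem_compl.2 hj) hij
  · refine .hcut univ S Sᶜ _ 1 zero_le_one one_le_two (union_compl S) disjoint_compl_right
      (fun i hi => by simp [rectOf, y, hi]) (fun i hi => by simp [rectOf, y, mem_compl.1 hi])
      (GSep.of_eq_rowOffset (hw' S) hxS hS fun i hi => by simp [y, hi])
      (GSep.of_eq_rowOffset (hw' Sᶜ) hxSc hSc fun i hi => by norm_num [y, mem_compl.1 hi])

theorem sum_le_of_nonOverlap {C : ℝ} (hC : 0 ≤ C) (hw : ∀ i ∈ s, 0 ≤ w i)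
    (hx : ∀ i ∈ s, 0 ≤ x i ∧ x i + w i ≤ C) (hy : ∀ i ∈ s, ∀ j ∈ s, y i < y j + 1)
    (hnov : ∀ i ∈ s, ∀ j ∈ s, i ≠ j →
      (rectOf x y w (fun _ => 1) i).NonOverlap (rectOf x y w (fun _ => 1) j)) :
    ∑ i ∈ s, w i ≤ C := by
  simpa using sum_le_sub_of_nonoverlapping_intervals s x w hC hw hx fun i hi j hj hij =>
    (hnov i hi j hj hij).horizontal (hy j hj i hi) (hy i hi j hj)

end Packing

theorem partition_iff_guillotine_packing_general (n : ℕ) (a : Fin n → ℕ) :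
    (∃ S : Finset (Fin n), 2 * ∑ i ∈ S, a i = ∑ i, a i) ↔
    ∃ x y : Fin n → ℝ,
      (∀ i, 0 ≤ x i ∧ x i + (a i : ℝ) ≤ (∑ j, (a j : ℝ)) / 2 ∧ 0 ≤ y i ∧ y i + 1 ≤ 2) ∧
      (∀ i j, i ≠ j →
        (rectOf x y (fun i => (a i : ℝ)) (fun _ => 1) i).NonOverlap
          (rectOf x y (fun i => (a i : ℝ)) (fun _ => 1) j)) ∧
      GSep (rectOf x y (fun i => (a i : ℝ)) (fun _ => 1)) Finset.univ
        ⟨0, (∑ j, (a j : ℝ)) / 2, 0, 2⟩ := by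
  have hw : ∀ i, 0 ≤ (a i : ℝ) := fun i => Nat.cast_nonneg _
  constructor
  · rintro ⟨S, hS⟩
    have hS' : 2 * ∑ i ∈ S, (a i : ℝ) = ∑ i, (a i : ℝ) := by exact_mod_cast hS
    have hsplit := sum_add_sum_compl S fun i => (a i : ℝ)
    exact exists_guillotine_packing_of_sum_eq hw S (by linarith) (by linarith)
  · rintro ⟨x, y, hbd, hnov, -⟩
    set S : Finset (Fin n) := {i | y i < 1}
    refine ⟨S, ?_⟩
    have hC : 0 ≤ (∑ j, (a j : ℝ)) / 2 := by positivity
    have hlow := sum_le_of_nonOverlap (s := S) hC (fun i _ => hw i)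
      (fun i _ => ⟨(hbd i).1, (hbd i).2.1⟩)
      (fun i hi j _ => by simp only [S, mem_filter_univ] at hi; linarith [hbd j])
      (fun i _ j _ => hnov i j)
    have hhigh := sum_le_of_nonOverlap (s := Sᶜ) hC (fun i _ => hw i)
      (fun i _ => ⟨(hbd i).1, (hbd i).2.1⟩)
      (fun i _ j hj => by
        simp only [S, mem_compl, mem_filter_univ, not_lt] at hj; linarith [hbd i])
      (fun i _ j _ => hnov i j)
    have hsplit := sum_add_sum_compl S fun i => (a i : ℝ)
    exact_mod_cast (show 2 * ∑ i ∈ S, (a i : ℝ) = ∑ i, (a i : ℝ) by linarith)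

/-- Reduction from Partition to guillotine strip packing: for positive integers
`a 1, …, a n` with total `T`, there is a partition of the integers into two sets each
summing to `T/2` if and only if the rectangles of height `1` and widths `a i` admit a
non-overlapping, guillotine-separable packing of height at most `2` into the strip of
width `T/2`. -/
theorem partition_iff_guillotine_packing (n : ℕ) (a : Fin n → ℕ) (ha : ∀ i, 0 < a i) :
    (∃ S : Finset (Fin n), 2 * ∑ i ∈ S, a i = ∑ i, a i) ↔
    ∃ x y : Fin n → ℝ,
      (∀ i, 0 ≤ x i ∧ x i + (a i : ℝ) ≤ (∑ j, (a j : ℝ)) / 2 ∧ 0 ≤ y i ∧ y i + 1 ≤ 2) ∧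
      (∀ i j, i ≠ j →
        (rectOf x y (fun i => (a i : ℝ)) (fun _ => 1) i).NonOverlap
          (rectOf x y (fun i => (a i : ℝ)) (fun _ => 1) j)) ∧
      GSep (rectOf x y (fun i => (a i : ℝ)) (fun _ => 1)) Finset.univ
        ⟨0, (∑ j, (a j : ℝ)) / 2, 0, 2⟩ :=
  partition_iff_guillotine_packing_general n a
end

section
/- Let B be a finite collection of at most m pairwise non-overlapping axis-aligned boxes inside [0,W]×[0,∞), each of height at most OPT/2 or extending above the horizontal line y = OPT/2. Then there exists a horizontal line segment ℓ* of width at least W/(2m+1), lying at height at least OPT/2, that does not intersect the interior of any box in B. Moreover ℓ* can be chosen to either lie on the line y = OPT/2 or contain the top edge of one of the boxes crossing that line. -/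
/-!
Let `w = W / (2m + 1)`. If a box crossing the line `y = OPT / 2` has width at least `w`, its
top edge is free, since a box whose interior met it would overlap the crossing box. Otherwise the crossing
boxes cut at most `c ≤ m` intervals of total length `< c w` out of `[0, W]`, so some free gap
has length at least `(W - c w) / (c + 1) ≥ w`; the gap bound comes from removing the interval
with the rightmost end and comparing the gap to its right with the inductively found gap on
its left.
-/

open Finset in
theorem exists_gap_of_pairwise_disjoint {ι : Type*} (l r : ι → ℝ) (S : Finset ι) {a b : ℝ}
    (hab : a ≤ b) (hS : ∀ j ∈ S, a ≤ l j ∧ l j < r j ∧ r j ≤ b)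
    (hdisj : (S : Set ι).Pairwise fun i j => r i ≤ l j ∨ r j ≤ l i) :
    ∃ x₁ x₂, a ≤ x₁ ∧ x₁ ≤ x₂ ∧ x₂ ≤ b ∧
      b - a - ∑ j ∈ S, (r j - l j) ≤ (#S + 1) * (x₂ - x₁) ∧
      ∀ j ∈ S, x₂ ≤ l j ∨ r j ≤ x₁ := by
  classical
  induction S using Finset.induction_on_max_value r generalizing b with
  | empty => exact ⟨a, b, le_rfl, hab, le_rfl, by simp, by simp⟩
  | insert k s hks hmax ih =>
    obtain ⟨hak, hk, hkb⟩ := hS k (mem_insert_self k s)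
    -- `k` has the rightmost right end, so the other intervals all lie in `[a, l k]`.
    have hleft : ∀ j ∈ s, a ≤ l j ∧ l j < r j ∧ r j ≤ l k := fun j hj => by
      obtain ⟨haj, hj', -⟩ := hS j (mem_insert_of_mem hj)
      refine ⟨haj, hj', ?_⟩
      rcases hdisj (by simp [hj]) (by simp) (ne_of_mem_of_not_mem hj hks) with h | h
      · exact h
      · linarith [hmax j hj]
    obtain ⟨x₁, x₂, hax₁, hx₁₂, hx₂k, hlen, hfree⟩ :=
      ih hak hleft (hdisj.mono (by simp [Set.subset_insert]))
    rw [sum_insert hks, card_insert_of_notMem hks]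
    push_cast
    rcases le_total (b - r k) (x₂ - x₁) with hgap | hgap
    · refine ⟨x₁, x₂, hax₁, hx₁₂, by linarith, by linarith, ?_⟩
      simp only [mem_insert, forall_eq_or_imp]
      exact ⟨Or.inl hx₂k, hfree⟩
    · refine ⟨r k, b, by linarith, hkb, le_rfl, by nlinarith, ?_⟩
      simp only [mem_insert, forall_eq_or_imp]
      exact ⟨Or.inr le_rfl, fun j hj => Or.inr (hmax j hj)⟩

namespace Box

def MemInterior (B : Box) (u y : ℝ) : Prop :=
  B.l < u ∧ u < B.r ∧ B.b < y ∧ y < B.t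

theorem NonOverlap.not_memInterior_top {A B : Box} (h : A.NonOverlap B) (hA : A.b < A.t)
    {u : ℝ} (hl : A.l < u) (hr : u < A.r) : ¬B.MemInterior u A.t := by
  rintro ⟨hBl, hBr, hBb, hBt⟩
  rcases h with h | h | h | h <;> linarith

theorem NonOverlap.horizontal_of_common_height {A B : Box} {y : ℝ} (h : A.NonOverlap B)
    (hA : A.b < y ∧ y < A.t) (hB : B.b < y ∧ y < B.t) : A.r ≤ B.l ∨ B.r ≤ A.l := by
  rcases h with h | h | h | h
  · exact Or.inl h
  · exact Or.inr h
  all_goals linarith [hA.1, hA.2, hB.1, hB.2]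

end Box

theorem free_segment_exists_general (m : ℕ) (W OPT : ℝ) (hW : 0 < W)
    (Bx : Fin m → Box)
    (hin : ∀ j, 0 ≤ (Bx j).l ∧ (Bx j).l ≤ (Bx j).r ∧ (Bx j).r ≤ W ∧
      0 ≤ (Bx j).b ∧ (Bx j).b ≤ (Bx j).t)
    (hdisj : ∀ j j', j ≠ j' → (Bx j).NonOverlap (Bx j')) :
    ∃ y' x₁ x₂ : ℝ, OPT / 2 ≤ y' ∧ 0 ≤ x₁ ∧ x₁ ≤ x₂ ∧ x₂ ≤ W ∧
      W / (2 * m + 1) ≤ x₂ - x₁ ∧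
      (∀ j, ∀ u, x₁ < u → u < x₂ →
        ¬((Bx j).l < u ∧ u < (Bx j).r ∧ (Bx j).b < y' ∧ y' < (Bx j).t)) ∧
      (y' = OPT / 2 ∨
        ∃ j, (Bx j).b < OPT / 2 ∧ OPT / 2 < (Bx j).t ∧ y' = (Bx j).t ∧
          (Bx j).l ≤ x₁ ∧ x₂ ≤ (Bx j).r) := by
  classical
  set w := W / (2 * m + 1) with hw
  set C := Finset.univ.filter fun j =>
    (Bx j).b < OPT / 2 ∧ OPT / 2 < (Bx j).t ∧ (Bx j).l < (Bx j).r
  by_cases hwide : ∃ j ∈ C, w ≤ (Bx j).r - (Bx j).l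
  · obtain ⟨j, hjC, hwj⟩ := hwide
    obtain ⟨hbj, htj, -⟩ := (Finset.mem_filter.1 hjC).2
    refine ⟨(Bx j).t, (Bx j).l, (Bx j).r, htj.le, (hin j).1, (hin j).2.1, (hin j).2.2.1, hwj,
      fun k u hl hr => ?_, Or.inr ⟨j, hbj, htj, rfl, le_rfl, le_rfl⟩⟩
    rcases eq_or_ne k j with rfl | hkj
    · exact fun h => h.2.2.2.false
    · exact (hdisj j k hkj.symm).not_memInterior_top (hbj.trans htj) hl hr
  push Not at hwide
  obtain ⟨x₁, x₂, h0x₁, hx₁₂, hx₂W, hlen, hfree⟩ :=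
    exists_gap_of_pairwise_disjoint (fun j => (Bx j).l) (fun j => (Bx j).r) C hW.le
      (fun j hj => ⟨(hin j).1, (Finset.mem_filter.1 hj).2.2.2, (hin j).2.2.1⟩)
      (fun i hi j hj hij => (hdisj i j hij).horizontal_of_common_height
        ⟨(Finset.mem_filter.1 hi).2.1, (Finset.mem_filter.1 hi).2.2.1⟩
        ⟨(Finset.mem_filter.1 hj).2.1, (Finset.mem_filter.1 hj).2.2.1⟩)
  have hsum : ∑ j ∈ C, ((Bx j).r - (Bx j).l) ≤ C.card * w := by
    simpa using Finset.sum_le_card_nsmul C _ w fun j hj => (hwide j hj).le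
  have hC : (C.card : ℝ) ≤ m := by
    exact_mod_cast (Finset.card_le_univ C).trans_eq (Fintype.card_fin m)
  have hWw : W = (2 * m + 1) * w := by rw [hw]; field_simp
  have hgap : (C.card + 1) * w ≤ (C.card + 1) * (x₂ - x₁) := by
    nlinarith [div_nonneg hW.le (by positivity : (0 : ℝ) ≤ 2 * m + 1)]
  refine ⟨OPT / 2, x₁, x₂, le_rfl, h0x₁, hx₁₂, hx₂W, ?_, fun k u hl hr hk => ?_, Or.inl rfl⟩
  · exact le_of_mul_le_mul_left hgap (Nat.cast_add_one_pos _)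
  · have hkC : k ∈ C :=
      Finset.mem_filter.2 ⟨Finset.mem_univ k, hk.2.2.1, hk.2.2.2, hk.1.trans hk.2.1⟩
    rcases hfree k hkC with h | h <;> linarith [hk.1, hk.2.1]

/-- Averaging lemma for the free segment `ℓ*`: given at most `m` pairwise
non-overlapping boxes inside `[0,W] × [0,∞)`, each of height at most `OPT/2` or
extending above the line `y = OPT/2`, there is a horizontal segment of width at least
`W/(2m+1)` at height at least `OPT/2` meeting no box interior; moreover it can be
chosen on the line `y = OPT/2` or along the top edge of a box crossing that line. -/
theorem free_segment_exists (m : ℕ) (W OPT : ℝ) (hW : 0 < W) (hOPT : 0 < OPT)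
    (Bx : Fin m → Box)
    (hin : ∀ j, 0 ≤ (Bx j).l ∧ (Bx j).l ≤ (Bx j).r ∧ (Bx j).r ≤ W ∧
      0 ≤ (Bx j).b ∧ (Bx j).b ≤ (Bx j).t)
    (hdisj : ∀ j j', j ≠ j' → (Bx j).NonOverlap (Bx j'))
    (hhalf : ∀ j, (Bx j).t - (Bx j).b ≤ OPT / 2 ∨ OPT / 2 < (Bx j).t) :
    ∃ y' x₁ x₂ : ℝ, OPT / 2 ≤ y' ∧ 0 ≤ x₁ ∧ x₁ ≤ x₂ ∧ x₂ ≤ W ∧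
      W / (2 * m + 1) ≤ x₂ - x₁ ∧
      (∀ j, ∀ u, x₁ < u → u < x₂ →
        ¬((Bx j).l < u ∧ u < (Bx j).r ∧ (Bx j).b < y' ∧ y' < (Bx j).t)) ∧
      (y' = OPT / 2 ∨
        ∃ j, (Bx j).b < OPT / 2 ∧ OPT / 2 < (Bx j).t ∧ y' = (Bx j).t ∧
          (Bx j).l ≤ x₁ ∧ x₂ ≤ (Bx j).r) :=
  free_segment_exists_general m W OPT hW Bx hin hdisj
end

section
/- Suppose in a guillotine cutting sequence a horizontal cut splits a rectangular piece R into an upper piece R_1 and a lower piece R_2, where R_2 lies at the bottom of the strip. Then swapping R_1 and R_2 (together with all items inside them, translated accordingly) within R yields another feasible, guillotine-separable packing of the same items. Consequently, any guillotine-separable packing can be transformed into a guillotine-separable packing of the same height in which every 'tall' item (height > OPT/2) has its bottom edge on the bottom of the strip. -/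
/-!
Translating every item of a guillotine separable family vertically by the same amount keeps it
guillotine separable in the translated piece. So after the swap the items of the upper piece are
separable in the bottom `H - y₀` of the strip and those of the lower piece in the top `y₀`, and
one horizontal cut at `H - y₀` separates the two groups. Feasibility needs no separate argument:
the cuts of a guillotine separable family keep every item inside the piece and any two distinct
items on opposite sides of some cut.
-/

namespace Box

def shiftY (B : Box) (d : ℝ) : Box :=
  ⟨B.l, B.r, B.b + d, B.t + d⟩

theorem Inside.trans {A B C : Box} (hAB : A.Inside B) (hBC : B.Inside C) : A.Inside C := by
  obtain ⟨h₁, h₂, h₃, h₄⟩ := hAB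
  obtain ⟨h₁', h₂', h₃', h₄'⟩ := hBC
  exact ⟨h₁'.trans h₁, h₂.trans h₂', h₃'.trans h₃, h₄.trans h₄'⟩

end Box

namespace GSep

variable {ι : Type} [DecidableEq ι] {rect rect' : ι → Box} {S S₁ S₂ : Finset ι} {B : Box}

theorem inside (hS : GSep rect S B) : ∀ i ∈ S, (rect i).Inside B := by
  induction hS with
  | empty => simp
  | single i B hi => simpa using hi
  | vcut S S₁ S₂ B x hlx hxr hU _ _ _ _ _ ih₁ ih₂ =>
    subst hU
    exact Finset.forall_mem_union.mpr
      ⟨fun i hi => (ih₁ i hi).trans ⟨le_rfl, hxr, le_rfl, le_rfl⟩,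
        fun i hi => (ih₂ i hi).trans ⟨hlx, le_rfl, le_rfl, le_rfl⟩⟩
  | hcut S S₁ S₂ B y hby hyt hU _ _ _ _ _ ih₁ ih₂ =>
    subst hU
    exact Finset.forall_mem_union.mpr
      ⟨fun i hi => (ih₁ i hi).trans ⟨le_rfl, le_rfl, le_rfl, hyt⟩,
        fun i hi => (ih₂ i hi).trans ⟨le_rfl, le_rfl, hby, le_rfl⟩⟩

theorem pairwise_nonOverlap (hS : GSep rect S B) :
    (S : Set ι).Pairwise fun i j => (rect i).NonOverlap (rect j) := by
  induction hS with
  | empty => simp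
  | single => simp
  | vcut S S₁ S₂ B x _ _ hU _ hleft hright _ _ ih₁ ih₂ =>
    rw [← hU, Finset.coe_union, Set.pairwise_union]
    exact ⟨ih₁, ih₂, fun i hi j hj _ =>
      ⟨Or.inl ((hleft i hi).trans (hright j hj)),
        Or.inr (Or.inl ((hleft i hi).trans (hright j hj)))⟩⟩
  | hcut S S₁ S₂ B y _ _ hU _ hbelow habove _ _ ih₁ ih₂ =>
    rw [← hU, Finset.coe_union, Set.pairwise_union]
    exact ⟨ih₁, ih₂, fun i hi j hj _ =>
      ⟨Or.inr (Or.inr (Or.inl ((hbelow i hi).trans (habove j hj)))),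
        Or.inr (Or.inr (Or.inr ((hbelow i hi).trans (habove j hj))))⟩⟩

theorem shiftY (hS : GSep rect S B) {d : ℝ} (hr : ∀ i ∈ S, rect' i = (rect i).shiftY d) :
    GSep rect' S (B.shiftY d) := by
  induction hS with
  | empty => exact empty _
  | single i B hi =>
    refine single i _ ?_
    rw [hr i (Finset.mem_singleton_self i)]
    obtain ⟨h₁, h₂, h₃, h₄⟩ := hi
    exact ⟨h₁, h₂, add_le_add_left h₃ d, add_le_add_left h₄ d⟩
  | vcut S S₁ S₂ B x hlx hxr hU hD hleft hright _ _ ih₁ ih₂ =>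
    subst hU
    obtain ⟨hr₁, hr₂⟩ := Finset.forall_mem_union.mp hr
    refine vcut _ S₁ S₂ _ x hlx hxr rfl hD (fun i hi => ?_) (fun i hi => ?_)
      (ih₁ hr₁) (ih₂ hr₂)
    · rw [hr₁ i hi]; exact hleft i hi
    · rw [hr₂ i hi]; exact hright i hi
  | hcut S S₁ S₂ B y hby hyt hU hD hbelow habove _ _ ih₁ ih₂ =>
    subst hU
    obtain ⟨hr₁, hr₂⟩ := Finset.forall_mem_union.mp hr
    refine hcut _ S₁ S₂ _ (y + d) (add_le_add_left hby d) (add_le_add_left hyt d) rfl hD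
      (fun i hi => ?_) (fun i hi => ?_) (ih₁ hr₁) (ih₂ hr₂)
    · rw [hr₁ i hi]; exact add_le_add_left (hbelow i hi) d
    · rw [hr₂ i hi]; exact add_le_add_left (habove i hi) d

theorem swap_hcut {y₀ : ℝ} (hby : B.b ≤ y₀) (hyt : y₀ ≤ B.t) (hD : Disjoint S₁ S₂)
    (hup : GSep rect S₁ ⟨B.l, B.r, y₀, B.t⟩) (hlow : GSep rect S₂ ⟨B.l, B.r, B.b, y₀⟩)
    (hr₁ : ∀ i ∈ S₁, rect' i = (rect i).shiftY (B.b - y₀))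
    (hr₂ : ∀ i ∈ S₂, rect' i = (rect i).shiftY (B.t - y₀)) :
    GSep rect' (S₁ ∪ S₂) B := by
  have hup' : GSep rect' S₁ ⟨B.l, B.r, B.b, B.b + B.t - y₀⟩ := by
    convert hup.shiftY hr₁ using 1
    simp only [Box.shiftY, Box.mk.injEq, true_and]
    constructor <;> ring
  have hlow' : GSep rect' S₂ ⟨B.l, B.r, B.b + B.t - y₀, B.t⟩ := by
    convert hlow.shiftY hr₂ using 1
    simp only [Box.shiftY, Box.mk.injEq, true_and]
    constructor <;> ring
  exact hcut _ S₁ S₂ B _ (by linarith) (by linarith) rfl hD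
    (fun i hi => (hup'.inside i hi).2.2.2) (fun i hi => (hlow'.inside i hi).2.2.1)
    hup' hlow'

end GSep

theorem guillotine_swap_general (n : ℕ) (W H y₀ : ℝ) (hy₀ : 0 ≤ y₀) (hyH : y₀ ≤ H)
    (w h x y : Fin n → ℝ)
    (S₁ S₂ : Finset (Fin n)) (hUnion : S₁ ∪ S₂ = Finset.univ) (hDisj : Disjoint S₁ S₂)
    (hsep₁ : GSep (rectOf x y w h) S₁ ⟨0, W, y₀, H⟩)
    (hsep₂ : GSep (rectOf x y w h) S₂ ⟨0, W, 0, y₀⟩) :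
    (∀ i, 0 ≤ x i ∧ x i + w i ≤ W ∧
      0 ≤ (if i ∈ S₁ then y i - y₀ else y i + (H - y₀)) ∧
      (if i ∈ S₁ then y i - y₀ else y i + (H - y₀)) + h i ≤ H) ∧
    (∀ i j, i ≠ j →
      (rectOf x (fun i => if i ∈ S₁ then y i - y₀ else y i + (H - y₀)) w h i).NonOverlap
        (rectOf x (fun i => if i ∈ S₁ then y i - y₀ else y i + (H - y₀)) w h j)) ∧
    GSep (rectOf x (fun i => if i ∈ S₁ then y i - y₀ else y i + (H - y₀)) w h)
      Finset.univ ⟨0, W, 0, H⟩ := by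
  set y' : Fin n → ℝ := fun i => if i ∈ S₁ then y i - y₀ else y i + (H - y₀)
  have hsep : GSep (rectOf x y' w h) Finset.univ ⟨0, W, 0, H⟩ := by
    rw [← hUnion]
    refine GSep.swap_hcut hy₀ hyH hDisj hsep₁ hsep₂ (fun i hi => ?_) (fun i hi => ?_)
    · simp only [y', rectOf, Box.shiftY, hi, if_true, Box.mk.injEq, true_and]
      constructor <;> ring
    · simp only [y', rectOf, Box.shiftY, Finset.disjoint_right.mp hDisj hi, if_false,
        Box.mk.injEq, true_and]
      ring
  have hnov := hsep.pairwise_nonOverlap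
  rw [Finset.coe_univ, Set.pairwise_univ] at hnov
  exact ⟨fun i => hsep.inside i (Finset.mem_univ i), hnov, hsep⟩

/-- Swapping the two sub-pieces of a horizontal guillotine cut preserves feasibility
and guillotine separability: if a horizontal cut at height `y₀` splits the piece
`[0,W] × [0,H]` into an upper part containing the items `S₁` and a lower part (at the
bottom of the strip) containing the items `S₂`, each guillotine separable in its part,
then moving the items of `S₁` down by `y₀` and the items of `S₂` up by `H − y₀` yields
a packing of the same items that is contained in the piece, non-overlapping, and
guillotine separable. -/
theorem guillotine_swap (n : ℕ) (W H y₀ : ℝ) (hW : 0 < W) (hy₀ : 0 ≤ y₀) (hyH : y₀ ≤ H)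
    (w h x y : Fin n → ℝ) (hw : ∀ i, 0 ≤ w i) (hh : ∀ i, 0 ≤ h i)
    (S₁ S₂ : Finset (Fin n)) (hUnion : S₁ ∪ S₂ = Finset.univ) (hDisj : Disjoint S₁ S₂)
    (hin : ∀ i, 0 ≤ x i ∧ x i + w i ≤ W ∧ 0 ≤ y i ∧ y i + h i ≤ H)
    (hupper : ∀ i ∈ S₁, y₀ ≤ y i)
    (hlower : ∀ i ∈ S₂, y i + h i ≤ y₀)
    (hnov : ∀ i j, i ≠ j → (rectOf x y w h i).NonOverlap (rectOf x y w h j))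
    (hsep₁ : GSep (rectOf x y w h) S₁ ⟨0, W, y₀, H⟩)
    (hsep₂ : GSep (rectOf x y w h) S₂ ⟨0, W, 0, y₀⟩) :
    (∀ i, 0 ≤ x i ∧ x i + w i ≤ W ∧
      0 ≤ (if i ∈ S₁ then y i - y₀ else y i + (H - y₀)) ∧
      (if i ∈ S₁ then y i - y₀ else y i + (H - y₀)) + h i ≤ H) ∧
    (∀ i j, i ≠ j →
      (rectOf x (fun i => if i ∈ S₁ then y i - y₀ else y i + (H - y₀)) w h i).NonOverlap
        (rectOf x (fun i => if i ∈ S₁ then y i - y₀ else y i + (H - y₀)) w h j)) ∧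
    GSep (rectOf x (fun i => if i ∈ S₁ then y i - y₀ else y i + (H - y₀)) w h)
      Finset.univ ⟨0, W, 0, H⟩ :=
  guillotine_swap_general n W H y₀ hy₀ hyH w h x y S₁ S₂ hUnion hDisj hsep₁ hsep₂
end

section
/- Let I be a set of n rectangles with integer heights h_i and let h_max = max_i h_i > n/ε for some ε ∈ (0,1]. Define rounded heights h_i' = ⌈h_i·n/(ε·h_max)⌉. Then: (1) h_i' ≤ ⌈n/ε⌉ for all i; (2) if OPT'' denotes the optimal strip-packing height with (fractional) heights h_i·n/(ε·h_max) and OPT' the optimal height with heights h_i', then OPT' ≤ (1+ε)·OPT''; (3) any packing with heights h_i' of height H, rescaled by factor ε·h_max/n, yields a packing with original heights h_i of height at most H·ε·h_max/n, which is at most (1+ε)·OPT where OPT is the original optimum. -/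
/-- A (non-overlapping, axis-aligned) strip packing of `n` rectangles with widths `w`
and heights `hgt` into the strip of width `W`, of height at most `H`. -/
def Packable (n : ℕ) (W : ℝ) (w hgt : Fin n → ℝ) (H : ℝ) : Prop :=
  ∃ x y : Fin n → ℝ,
    (∀ i, 0 ≤ x i ∧ x i + w i ≤ W ∧ 0 ≤ y i ∧ y i + hgt i ≤ H) ∧
    (∀ i j, i ≠ j →
      x i + w i ≤ x j ∨ x j + w j ≤ x i ∨ y i + hgt i ≤ y j ∨ y j + hgt j ≤ y i)

open Finset

/-!
Rescaling all heights by `c = ε·hmax/n` turns the fractional instance into the original one, so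
`OPT = c·OPT''`, and a packing with the rounded heights, stretched by `c`, packs the original items.
Rounding up adds less than `1` to each height; lifting every item by the number of items lying
entirely below it absorbs these increases, so `OPT' ≤ OPT'' + n`. Finally the tallest item has
fractional height `n/ε`, whence `n ≤ ε·OPT''`.
-/

namespace Packable

variable {n : ℕ} {W : ℝ} {w g g' : Fin n → ℝ} {H : ℝ}

theorem height_le (hp : Packable n W w g H) (i : Fin n) : g i ≤ H := by
  obtain ⟨x, y, hbox, -⟩ := hp
  linarith [(hbox i).2.2.1, (hbox i).2.2.2]

theorem mono_heights (hle : ∀ i, g' i ≤ g i) (hp : Packable n W w g H) :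
    Packable n W w g' H := by
  obtain ⟨x, y, hbox, hdisj⟩ := hp
  refine ⟨x, y, fun i => ?_, fun i j hij => ?_⟩
  · obtain ⟨hx0, hxW, hy0, hyH⟩ := hbox i
    exact ⟨hx0, hxW, hy0, by linarith [hle i]⟩
  · exact (hdisj i j hij).imp id <| .imp id <|
      .imp (fun hij => by linarith [hle i]) (fun hji => by linarith [hle j])

theorem smul_heights {c : ℝ} (hc : 0 ≤ c) (hp : Packable n W w g H) :
    Packable n W w (fun i => c * g i) (c * H) := by
  obtain ⟨x, y, hbox, hdisj⟩ := hp
  refine ⟨x, fun i => c * y i, fun i => ?_, fun i j hij => ?_⟩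
  · obtain ⟨hx0, hxW, hy0, hyH⟩ := hbox i
    refine ⟨hx0, hxW, mul_nonneg hc hy0, ?_⟩
    rw [← mul_add]
    exact mul_le_mul_of_nonneg_left hyH hc
  · refine (hdisj i j hij).imp id (.imp id (.imp (fun hle => ?_) (fun hle => ?_))) <;>
    · rw [← mul_add]
      exact mul_le_mul_of_nonneg_left hle hc

theorem add_heights {δ : ℝ} (hg : ∀ i, 0 < g i) (hδ : 0 ≤ δ) (hg' : ∀ i, g' i ≤ g i + δ)
    (hp : Packable n W w g H) : Packable n W w g' (H + n * δ) := by
  classical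
  obtain ⟨x, y, hbox, hdisj⟩ := hp
  set below : Fin n → Finset (Fin n) := fun i => {k | y k + g k ≤ y i}
  have not_mem_below : ∀ i, i ∉ below i := fun i hi => by
    simp only [below, mem_filter, mem_univ, true_and] at hi
    linarith [hg i]
  have card_below_lt : ∀ i j, y i + g i ≤ y j → #(below i) + 1 ≤ #(below j) := by
    intro i j hij
    rw [← card_insert_of_notMem (not_mem_below i)]
    refine card_le_card fun k hk => ?_
    simp only [below, mem_insert, mem_filter, mem_univ, true_and] at hk ⊢
    rcases hk with rfl | hk
    · exact hij
    · linarith [hg i]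
  set y' : Fin n → ℝ := fun i => y i + #(below i) * δ
  have top_le : ∀ i, y' i + g' i ≤ y i + g i + (#(below i) + 1 : ℕ) * δ := fun i => by
    push_cast
    linarith [hg' i]
  refine ⟨x, y', fun i => ?_, fun i j hij => ?_⟩
  · obtain ⟨hx0, hxW, hy0, hyH⟩ := hbox i
    have hcard : #(below i) + 1 ≤ n := by
      simpa [card_insert_of_notMem (not_mem_below i)] using
        card_le_univ (insert i (below i))
    refine ⟨hx0, hxW, by positivity, (top_le i).trans ?_⟩
    gcongr
  · have lift : ∀ i j, y i + g i ≤ y j → y' i + g' i ≤ y' j := fun i j hle =>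
      (top_le i).trans (add_le_add hle (by gcongr; exact card_below_lt i j hle))
    exact (hdisj i j hij).imp id (.imp id (.imp (lift i j) (lift j i)))

end Packable

section Stacking

variable {n : ℕ} {W : ℝ} {w g : Fin n → ℝ}

theorem packable_sum (hwW : ∀ i, w i ≤ W) (hg : ∀ i, 0 ≤ g i) :
    Packable n W w g (∑ i, g i) := by
  classical
  have top_eq : ∀ i, ∑ j ∈ Iio i, g j + g i = ∑ j ∈ Iic i, g j := fun i => by
    rw [← Iio_insert, sum_insert notMem_Iio_self, add_comm]
  have top_le : ∀ i (s : Finset (Fin n)), Iic i ⊆ s →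
      ∑ j ∈ Iio i, g j + g i ≤ ∑ j ∈ s, g j := fun i s hs => by
    rw [top_eq]
    exact sum_le_sum_of_subset_of_nonneg hs fun j _ _ => hg j
  have stacked : ∀ i j, i < j → ∑ k ∈ Iio i, g k + g i ≤ ∑ k ∈ Iio j, g k :=
    fun i j hij => top_le i _ fun k hk =>
      mem_Iio.2 ((mem_Iic.1 hk).trans_lt hij)
  refine ⟨fun _ => 0, fun i => ∑ j ∈ Iio i, g j, fun i => ?_, fun i j hij => ?_⟩
  · exact ⟨le_rfl, by simpa using hwW i, sum_nonneg fun j _ => hg j,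
      top_le i _ (subset_univ _)⟩
  · rcases hij.lt_or_gt with hlt | hlt
    · exact .inr (.inr (.inl (stacked i j hlt)))
    · exact .inr (.inr (.inr (stacked j i hlt)))

theorem nonempty_packable (hwW : ∀ i, w i ≤ W) (hg : ∀ i, 0 ≤ g i) :
    {H | Packable n W w g H}.Nonempty :=
  ⟨_, packable_sum hwW hg⟩

theorem bddBelow_packable [NeZero n] (hg : ∀ i, 0 ≤ g i) :
    BddBelow {H | Packable n W w g H} :=
  ⟨0, fun _ hp => (hg 0).trans (hp.height_le 0)⟩

end Stacking

/-- Junk (`sInf` of an empty or unbounded set) unless `0 < n` and every item fits into the strip. -/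
noncomputable def optHeight (n : ℕ) (W : ℝ) (w g : Fin n → ℝ) : ℝ :=
  sInf {H | Packable n W w g H}

section OptHeight

variable {n : ℕ} {W : ℝ} {w g g' : Fin n → ℝ}

theorem le_optHeight (hwW : ∀ i, w i ≤ W) (hg : ∀ i, 0 ≤ g i) (i : Fin n) :
    g i ≤ optHeight n W w g :=
  le_csInf (nonempty_packable hwW hg) fun _ hp => hp.height_le i

theorem optHeight_le_add [NeZero n] {δ : ℝ} (hwW : ∀ i, w i ≤ W) (hg : ∀ i, 0 < g i)
    (hg'0 : ∀ i, 0 ≤ g' i) (hδ : 0 ≤ δ) (hg' : ∀ i, g' i ≤ g i + δ) :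
    optHeight n W w g' ≤ optHeight n W w g + n * δ := by
  rw [← sub_le_iff_le_add]
  refine le_csInf (nonempty_packable hwW fun i => (hg i).le) fun H hp => ?_
  rw [sub_le_iff_le_add]
  exact csInf_le (bddBelow_packable hg'0) (hp.add_heights hg hδ hg')

theorem optHeight_smul_le [NeZero n] {c : ℝ} (hc : 0 < c) (hwW : ∀ i, w i ≤ W)
    (hg : ∀ i, 0 ≤ g i) :
    optHeight n W w (fun i => c * g i) ≤ c * optHeight n W w g := by
  rw [← div_le_iff₀' hc]
  refine le_csInf (nonempty_packable hwW hg) fun H hp => ?_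
  rw [div_le_iff₀' hc]
  exact csInf_le (bddBelow_packable fun i => mul_nonneg hc.le (hg i)) (hp.smul_heights hc.le)

end OptHeight

theorem height_rounding_general (n : ℕ) (hn : 0 < n) (ε W : ℝ) (hε0 : 0 < ε)
    (w : Fin n → ℝ) (hwW : ∀ i, w i ≤ W)
    (h : Fin n → ℕ) (hhpos : ∀ i, 0 < h i)
    (hmax : ℕ) (hmax_def : hmax = Finset.univ.sup h)
    (hbig : (n : ℝ) / ε < (hmax : ℝ)) :
    (∀ i, ⌈(h i : ℝ) * n / (ε * hmax)⌉₊ ≤ ⌈(n : ℝ) / ε⌉₊) ∧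
    sInf {H : ℝ | Packable n W w (fun i => (⌈(h i : ℝ) * n / (ε * hmax)⌉₊ : ℝ)) H}
      ≤ (1 + ε) *
        sInf {H : ℝ | Packable n W w (fun i => (h i : ℝ) * n / (ε * hmax)) H} ∧
    (∀ H : ℝ,
      Packable n W w (fun i => (⌈(h i : ℝ) * n / (ε * hmax)⌉₊ : ℝ)) H →
      Packable n W w (fun i => (h i : ℝ)) (H * (ε * hmax / n))) ∧
    sInf {H : ℝ | Packable n W w (fun i => (⌈(h i : ℝ) * n / (ε * hmax)⌉₊ : ℝ)) H}
      * (ε * hmax / n)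
      ≤ (1 + ε) * sInf {H : ℝ | Packable n W w (fun i => (h i : ℝ)) H} := by
  have : NeZero n := ⟨hn.ne'⟩
  have hmax_pos : (0 : ℝ) < hmax := (by positivity : (0 : ℝ) < n / ε).trans hbig
  set c : ℝ := ε * hmax / n with hc_def
  have hc : 0 < c := by positivity
  have hscale : ∀ x : ℝ, x * n / (ε * hmax) = c⁻¹ * x := fun x => by
    rw [hc_def, inv_div]; ring
  simp only [hscale]
  have hh0 : ∀ i, (0 : ℝ) ≤ c⁻¹ * h i := fun i => by positivity
  have hh_le : ∀ i, (h i : ℝ) ≤ hmax := fun i => by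
    exact_mod_cast hmax_def ▸ le_sup (mem_univ i)
  obtain ⟨imax, -, himax⟩ := exists_mem_eq_sup univ univ_nonempty h
  have hscaled_max : c⁻¹ * hmax = n / ε := by rw [← hscale]; field_simp
  have hopt_ge : (n : ℝ) ≤ ε * optHeight n W w (fun i => c⁻¹ * h i) := by
    rw [← div_le_iff₀' hε0, ← hscaled_max, hmax_def, himax]
    exact le_optHeight hwW hh0 imax
  have hopt_rounded : optHeight n W w (fun i => (⌈c⁻¹ * h i⌉₊ : ℝ)) ≤
      (1 + ε) * optHeight n W w (fun i => c⁻¹ * h i) := by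
    have := optHeight_le_add hwW (fun i => by have := hhpos i; positivity)
      (fun i => Nat.cast_nonneg _) zero_le_one fun i => (Nat.ceil_lt_add_one (hh0 i)).le
    linarith
  refine ⟨fun i => ?_, hopt_rounded, fun H hp => ?_, ?_⟩
  · refine Nat.ceil_le_ceil (hscaled_max ▸ ?_)
    exact mul_le_mul_of_nonneg_left (hh_le i) (inv_nonneg.2 hc.le)
  · rw [mul_comm]
    refine (hp.smul_heights hc.le).mono_heights fun i => ?_
    calc (h i : ℝ) = c * (c⁻¹ * h i) := by field_simp
      _ ≤ c * ⌈c⁻¹ * h i⌉₊ := mul_le_mul_of_nonneg_left (Nat.le_ceil _) hc.le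
  · have hopt_orig : optHeight n W w (fun i => c⁻¹ * h i) * c ≤
        optHeight n W w (fun i => (h i : ℝ)) := by
      rw [← le_div_iff₀ hc, div_eq_inv_mul]
      exact optHeight_smul_le (inv_pos.2 hc) hwW fun i => Nat.cast_nonneg _
    calc optHeight n W w (fun i => (⌈c⁻¹ * h i⌉₊ : ℝ)) * c
        ≤ (1 + ε) * optHeight n W w (fun i => c⁻¹ * h i) * c := by gcongr
      _ = (1 + ε) * (optHeight n W w (fun i => c⁻¹ * h i) * c) := by ring
      _ ≤ (1 + ε) * optHeight n W w (fun i => (h i : ℝ)) := by gcongr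

/-- Height rounding for the pseudo-polynomial scheme.  Let `h` be integer heights with
maximum `hmax > n/ε`, and round `h i` to `h' i = ⌈h i · n / (ε · hmax)⌉`.  Then
(1) `h' i ≤ ⌈n/ε⌉`; (2) the optimal height `OPT'` with heights `h'` is at most `(1+ε)`
times the optimal height `OPT''` with the fractional heights `h i · n/(ε·hmax)`;
(3) any packing with heights `h'` of height `H` rescales to a packing with the original
heights of height `H · ε · hmax / n`, and `OPT' · ε · hmax / n ≤ (1+ε) · OPT` where
`OPT` is the original optimum. -/
theorem height_rounding (n : ℕ) (hn : 0 < n) (ε W : ℝ) (hε0 : 0 < ε) (hε1 : ε ≤ 1)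
    (hW : 0 < W)
    (w : Fin n → ℝ) (hwpos : ∀ i, 0 < w i) (hwW : ∀ i, w i ≤ W)
    (h : Fin n → ℕ) (hhpos : ∀ i, 0 < h i)
    (hmax : ℕ) (hmax_def : hmax = Finset.univ.sup h)
    (hbig : (n : ℝ) / ε < (hmax : ℝ)) :
    (∀ i, ⌈(h i : ℝ) * n / (ε * hmax)⌉₊ ≤ ⌈(n : ℝ) / ε⌉₊) ∧
    sInf {H : ℝ | Packable n W w (fun i => (⌈(h i : ℝ) * n / (ε * hmax)⌉₊ : ℝ)) H}
      ≤ (1 + ε) *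
        sInf {H : ℝ | Packable n W w (fun i => (h i : ℝ) * n / (ε * hmax)) H} ∧
    (∀ H : ℝ,
      Packable n W w (fun i => (⌈(h i : ℝ) * n / (ε * hmax)⌉₊ : ℝ)) H →
      Packable n W w (fun i => (h i : ℝ)) (H * (ε * hmax / n))) ∧
    sInf {H : ℝ | Packable n W w (fun i => (⌈(h i : ℝ) * n / (ε * hmax)⌉₊ : ℝ)) H}
      * (ε * hmax / n)
      ≤ (1 + ε) * sInf {H : ℝ | Packable n W w (fun i => (h i : ℝ)) H} :=
  height_rounding_general n hn ε W hε0 w hwW h hhpos hmax hmax_def hbig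
end
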